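/- Let a ∈ ℝ, V : [a,∞) → ℝ continuous with V(x) ≥ E for all x ≥ a, where E ∈ ℝ. Let ψ : [a,∞) → ℝ be twice continuously differentiable, square-integrable on [a,∞), and satisfy −ψ''(x) + V(x)ψ(x) = Eψ(x) for all x ≥ a. Then ψ' is square-integrable on [a,∞) and the function x ↦ (V(x) − E)^{1/2}·ψ(x) is square-integrable on [a,∞); in fact ∫_a^∞ ( (ψ'(x))² + (V(x)−E)·ψ(x)² ) dx < ∞. -/

import Mathlib

/-!
The flux `F = ψ ψ'` has derivative `ψ'² + (V - E) ψ² ≥ 0`, so it is nondecreasing. If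
`F x₀ > 0`, then `(ψ²)' = 2F ≥ 2 F x₀` beyond `x₀`, so `ψ²` grows linearly, which is incompatible
with `ψ ∈ L²`. Hence `F ≤ 0`, the nondecreasing `F` has a limit at `+∞`, and its nonnegative
derivative, the energy density, is integrable.
-/

open MeasureTheory Set Filter Topology

lemma not_integrableOn_Ioi_of_tendsto_atTop {f : ℝ → ℝ} {a : ℝ} (hf : Tendsto f atTop atTop) :
    ¬ IntegrableOn f (Ioi a) := by
  intro hint
  obtain ⟨t, ht⟩ := eventually_atTop.1 (hf.eventually_ge_atTop 1)
  have hone : IntegrableOn (fun _ ↦ (1 : ℝ)) (Ioi (max a t)) := by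
    refine Integrable.mono' (hint.mono_set (Ioi_subset_Ioi (le_max_left a t)))
      aestronglyMeasurable_const ?_
    filter_upwards [ae_restrict_mem measurableSet_Ioi] with x hx
    simpa using ht x (le_max_right a t |>.trans hx.out.le)
  simp [integrableOn_const_iff] at hone

lemma monotoneOn_Ioi_of_hasDerivAt_nonneg {f f' : ℝ → ℝ} {a : ℝ}
    (hf : ∀ x ∈ Ioi a, HasDerivAt f (f' x) x) (hf' : ∀ x ∈ Ioi a, 0 ≤ f' x) :
    MonotoneOn f (Ioi a) :=
  monotoneOn_of_hasDerivWithinAt_nonneg (convex_Ioi a)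
    (fun x hx ↦ (hf x hx).continuousAt.continuousWithinAt)
    (fun x hx ↦ (hf x (interior_subset hx)).hasDerivWithinAt)
    (fun x hx ↦ hf' x (interior_subset hx))

lemma MonotoneOn.exists_tendsto_atTop_of_le {f : ℝ → ℝ} {a C : ℝ} (hf : MonotoneOn f (Ioi a))
    (hC : ∀ x ∈ Ioi a, f x ≤ C) : ∃ l, Tendsto f atTop (𝓝 l) := by
  set g : ℝ → ℝ := fun x ↦ f (max (a + 1) x)
  have hmem : ∀ x, max (a + 1) x ∈ Ioi a := fun x ↦ lt_of_lt_of_le (lt_add_one a) (le_max_left _ _)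
  have hg : Monotone g := fun x y hxy ↦ hf (hmem x) (hmem y) (max_le_max_left _ hxy)
  refine ⟨⨆ x, g x, (tendsto_atTop_ciSup hg ⟨C, ?_⟩).congr' ?_⟩
  · rintro _ ⟨x, rfl⟩
    exact hC _ (hmem x)
  · filter_upwards [eventually_ge_atTop (a + 1)] with x hx
    simp [g, max_eq_right hx]

theorem integrableOn_Ioi_deriv_of_nonneg_of_le {g g' : ℝ → ℝ} {a C : ℝ}
    (hcont : ContinuousWithinAt g (Ici a) a) (hderiv : ∀ x ∈ Ioi a, HasDerivAt g (g' x) x)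
    (hg' : ∀ x ∈ Ioi a, 0 ≤ g' x) (hC : ∀ x ∈ Ioi a, g x ≤ C) : IntegrableOn g' (Ioi a) := by
  obtain ⟨l, hl⟩ := (monotoneOn_Ioi_of_hasDerivAt_nonneg hderiv hg').exists_tendsto_atTop_of_le hC
  exact integrableOn_Ioi_deriv_of_nonneg hcont hderiv hg' hl

theorem mul_deriv_nonpos_of_integrableOn_sq {u u' : ℝ → ℝ} {a : ℝ}
    (hu : ∀ x ∈ Ioi a, HasDerivAt u (u' x) x) (hmono : MonotoneOn (fun x ↦ u x * u' x) (Ioi a))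
    (hint : IntegrableOn (fun x ↦ u x ^ 2) (Ioi a)) {x₀ : ℝ} (hx₀ : a < x₀) :
    u x₀ * u' x₀ ≤ 0 := by
  by_contra! hc
  have hsq : ∀ x ∈ Ioi a, HasDerivAt (fun x ↦ u x ^ 2) (2 * (u x * u' x)) x := fun x hx ↦ by
    simpa [mul_assoc] using (hu x hx).fun_pow 2
  have hsub : Ici x₀ ⊆ Ioi a := Ici_subset_Ioi.2 hx₀
  have hgrowth : ∀ x ∈ Ici x₀, 2 * (u x₀ * u' x₀) * (x - x₀) ≤ u x ^ 2 - u x₀ ^ 2 := by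
    refine fun x hx ↦ (convex_Ici x₀).mul_sub_le_image_sub_of_le_deriv
      (fun y hy ↦ (hsq y (hsub hy)).continuousAt.continuousWithinAt)
      (fun y hy ↦ (hsq y (hsub (interior_subset hy))).differentiableAt.differentiableWithinAt)
      (fun y hy ↦ ?_) x₀ self_mem_Ici x hx hx
    rw [interior_Ici] at hy
    rw [(hsq y (hsub hy.out.le)).deriv]
    exact mul_le_mul_of_nonneg_left (hmono (hsub self_mem_Ici) (hsub hy.out.le) hy.out.le)
      two_pos.le
  refine not_integrableOn_Ioi_of_tendsto_atTop ?_ hint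
  have hlinear : Tendsto (fun x ↦ 2 * (u x₀ * u' x₀) * (x - x₀)) atTop atTop :=
    (tendsto_atTop_add_const_right atTop (-x₀) tendsto_id).const_mul_atTop (by positivity)
  refine tendsto_atTop_mono' _ ?_ hlinear
  filter_upwards [eventually_ge_atTop x₀] with x hx
  linarith [hgrowth x hx, sq_nonneg (u x₀)]

theorem integrableOn_deriv_sq_add_mul_sq {u q : ℝ → ℝ} {a : ℝ} (hu : ContDiffOn ℝ 2 u (Ici a))
    (hq : ∀ x ∈ Ioi a, 0 ≤ q x) (hu'' : ∀ x ∈ Ioi a, deriv (deriv u) x = q x * u x)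
    (hint : IntegrableOn (fun x ↦ u x ^ 2) (Ioi a)) :
    IntegrableOn (fun x ↦ deriv u x ^ 2 + q x * u x ^ 2) (Ioi a) := by
  have hu_Ioi : ContDiffOn ℝ 2 u (Ioi a) := hu.mono Ioi_subset_Ici_self
  have hderiv : ∀ x ∈ Ioi a, HasDerivAt u (deriv u x) x := fun x hx ↦
    (hu_Ioi.differentiableOn two_ne_zero).differentiableAt (Ioi_mem_nhds hx) |>.hasDerivAt
  have hu'_Ioi : ContDiffOn ℝ 1 (deriv u) (Ioi a) :=
    hu_Ioi.deriv_of_isOpen isOpen_Ioi (by norm_num)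
  have hderiv2 : ∀ x ∈ Ioi a, HasDerivAt (deriv u) (q x * u x) x := fun x hx ↦
    ((hu'_Ioi.differentiableOn one_ne_zero).differentiableAt (Ioi_mem_nhds hx)).hasDerivAt
      |>.congr_deriv (hu'' x hx)
  have hdensity : ∀ x ∈ Ioi a, 0 ≤ deriv u x ^ 2 + q x * u x ^ 2 := fun x hx ↦
    add_nonneg (sq_nonneg _) (mul_nonneg (hq x hx) (sq_nonneg _))
  have hflux : ∀ x ∈ Ioi a,
      HasDerivAt (fun x ↦ u x * deriv u x) (deriv u x ^ 2 + q x * u x ^ 2) x := fun x hx ↦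
    ((hderiv x hx).mul (hderiv2 x hx)).congr_deriv (by ring)
  have hflux_nonpos : ∀ x ∈ Ioi a, u x * deriv u x ≤ 0 := fun x hx ↦
    mul_deriv_nonpos_of_integrableOn_sq hderiv
      (monotoneOn_Ioi_of_hasDerivAt_nonneg hflux hdensity) hint hx
  -- `deriv u a` is junk; the one-sided derivative extends the flux continuously to `a`.
  set G : ℝ → ℝ := fun x ↦ u x * derivWithin u (Ici a) x
  have hG_cont : ContinuousOn G (Ici a) :=
    hu.continuousOn.mul (hu.continuousOn_derivWithin (uniqueDiffOn_Ici a) (by norm_num))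
  have hG_flux : ∀ x ∈ Ioi a, G =ᶠ[𝓝 x] fun x ↦ u x * deriv u x := fun x hx ↦ by
    filter_upwards [Ioi_mem_nhds hx] with y hy
    simp only [G, derivWithin_of_mem_nhds (Ici_mem_nhds hy.out)]
  exact integrableOn_Ioi_deriv_of_nonneg_of_le (C := 0) (hG_cont a self_mem_Ici)
    (fun x hx ↦ (hflux x hx).congr_of_eventuallyEq (hG_flux x hx)) hdensity
    fun x hx ↦ (hG_flux x hx).eq_of_nhds ▸ hflux_nonpos x hx

theorem eigensolution_finite_energy_general (a : ℝ) (V : ℝ → ℝ)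
    (E : ℝ) (hVE : ∀ x ≥ a, E ≤ V x)
    (ψ : ℝ → ℝ) (hψC2 : ContDiffOn ℝ 2 ψ (Set.Ici a))
    (hψL2 : IntegrableOn (fun x => (ψ x) ^ 2) (Set.Ici a))
    (heq : ∀ x ≥ a, -(deriv (deriv ψ) x) + V x * ψ x = E * ψ x) :
    IntegrableOn (fun x => (deriv ψ x) ^ 2) (Set.Ici a) ∧
    IntegrableOn (fun x => (Real.sqrt (V x - E) * ψ x) ^ 2) (Set.Ici a) ∧
    IntegrableOn (fun x => (deriv ψ x) ^ 2 + (V x - E) * (ψ x) ^ 2) (Set.Ici a) := by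
  have hVE' : ∀ x ∈ Ici a, 0 ≤ V x - E := fun x hx ↦ sub_nonneg.2 (hVE x hx)
  have henergy : IntegrableOn (fun x => (deriv ψ x) ^ 2 + (V x - E) * (ψ x) ^ 2) (Ici a) := by
    rw [integrableOn_Ici_iff_integrableOn_Ioi]
    refine integrableOn_deriv_sq_add_mul_sq hψC2 (fun x hx ↦ hVE' x hx.out.le)
      (fun x hx ↦ ?_) (hψL2.mono_set Ioi_subset_Ici_self)
    linear_combination -heq x hx.out.le
  have hkinetic : IntegrableOn (fun x => (deriv ψ x) ^ 2) (Ici a) := by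
    refine henergy.mono' ((measurable_deriv ψ).pow_const 2).aestronglyMeasurable ?_
    filter_upwards [ae_restrict_mem measurableSet_Ici] with x hx
    rw [Real.norm_of_nonneg (sq_nonneg _)]
    exact le_add_of_nonneg_right (mul_nonneg (hVE' x hx) (sq_nonneg _))
  refine ⟨hkinetic, (henergy.sub hkinetic).congr_fun (fun x hx ↦ ?_) measurableSet_Ici, henergy⟩
  simp [mul_pow, Real.sq_sqrt (hVE' x hx)]

/-- Half-line case of Proposition 2.2: any `L²` solution of `−ψ'' + Vψ = Eψ` on
`[a,∞)` with `V ≥ E` automatically has finite energy: `ψ' ∈ L²`,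
`(V−E)^{1/2}ψ ∈ L²`, and `∫_a^∞ ((ψ')² + (V−E)ψ²) < ∞`. -/
theorem eigensolution_finite_energy (a : ℝ) (V : ℝ → ℝ)
    (hV : ContinuousOn V (Set.Ici a)) (E : ℝ) (hVE : ∀ x ≥ a, E ≤ V x)
    (ψ : ℝ → ℝ) (hψC2 : ContDiffOn ℝ 2 ψ (Set.Ici a))
    (hψL2 : IntegrableOn (fun x => (ψ x) ^ 2) (Set.Ici a))
    (heq : ∀ x ≥ a, -(deriv (deriv ψ) x) + V x * ψ x = E * ψ x) :
    IntegrableOn (fun x => (deriv ψ x) ^ 2) (Set.Ici a) ∧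
    IntegrableOn (fun x => (Real.sqrt (V x - E) * ψ x) ^ 2) (Set.Ici a) ∧
    IntegrableOn (fun x => (deriv ψ x) ^ 2 + (V x - E) * (ψ x) ^ 2) (Set.Ici a) :=
  eigensolution_finite_energy_general a V E hVE ψ hψC2 hψL2 heq
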